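/- arXiv:1211.6359 — 2 statements merged into one kernel-verified Lean document; each statement's English description precedes it below -/
import Mathlib

section
/- For q = 1 and 1 < j < n, the restricted Eulerian numbers are symmetric: the number of permutations π of [n] with π(j) = n and exactly k descents equals the number with π(j) = n and exactly n−1−k descents. -/
namespace QEuler

/-- inversion number of a word -/
def invL : List ℕ → ℕ
  | [] => 0
  | a :: l => l.countP (fun b => decide (b < a)) + invL l

/-- descent set positions (1-indexed) of a word -/
def descSet (w : List ℕ) : List ℕ :=
  (List.range (w.length - 1)).filter (fun i => decide (w.getD (i+1) 0 < w.getD i 0))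

def desL (w : List ℕ) : ℕ := (descSet w).length

def majL (w : List ℕ) : ℕ := ((descSet w).map (· + 1)).sum

def IncreasingL (w : List ℕ) : Prop := w.Chain' (· < ·)

def IsHook (w : List ℕ) : Prop :=
  2 ≤ w.length ∧ w.getD 1 0 < w.getD 0 0 ∧ w.tail.Chain' (· < ·)

def lastDesc (w : List ℕ) : Option ℕ := (descSet w).max?

/-- hook factorization: increasing prefix and list of hooks -/
def hookAux : ℕ → List ℕ → List ℕ × List (List ℕ)
  | 0, w => (w, [])
  | fuel+1, w =>
    match lastDesc w with
    | none => (w, [])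
    | some i =>
      let r := hookAux fuel (w.take i)
      (r.1, r.2 ++ [w.drop i])

def hookFact (w : List ℕ) : List ℕ × List (List ℕ) := hookAux w.length w

def pixL (w : List ℕ) : ℕ := (hookFact w).1.length

def lecL (w : List ℕ) : ℕ := ((hookFact w).2.map invL).sum

/-- rightmost index of the maximum letter -/
def rmax (w : List ℕ) : ℕ := (w.length - 1) - (w.reverse.idxOf (w.foldr max 0))

def rixAux : ℕ → List ℕ → ℕ
  | 0, _ => 0
  | fuel+1, w =>
    if w = [] then 0
    else
      let i := rmax w
      if i + 1 = w.length then 1 + rixAux fuel (w.take (w.length - 1))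
      else if i = 0 then 0
      else rixAux fuel (w.drop (i+1))

def rixL (w : List ℕ) : ℕ := rixAux w.length w

/-- admissible inversions of a word (0-indexed pairs) -/
def aiL (w : List ℕ) : ℕ :=
  ((Finset.range w.length ×ˢ Finset.range w.length).filter
    (fun p => p.1 < p.2 ∧ w.getD p.2 0 < w.getD p.1 0 ∧
      ((0 < p.1 ∧ w.getD (p.1 - 1) 0 < w.getD p.1 0) ∨
        ∃ l ∈ Finset.Ioo p.1 p.2, w.getD p.1 0 < w.getD l 0))).card

/-- the word π(1)π(2)⋯π(n) of a permutation, with letters in {1,…,n} -/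
def word {n : ℕ} (π : Equiv.Perm (Fin n)) : List ℕ := List.ofFn (fun i => (π i : ℕ) + 1)

def des {n : ℕ} (π : Equiv.Perm (Fin n)) : ℕ := desL (word π)
def maj {n : ℕ} (π : Equiv.Perm (Fin n)) : ℕ := majL (word π)
def inv {n : ℕ} (π : Equiv.Perm (Fin n)) : ℕ := invL (word π)
def lec {n : ℕ} (π : Equiv.Perm (Fin n)) : ℕ := lecL (word π)
def pix {n : ℕ} (π : Equiv.Perm (Fin n)) : ℕ := pixL (word π)
def rix {n : ℕ} (π : Equiv.Perm (Fin n)) : ℕ := rixL (word π)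
def ai  {n : ℕ} (π : Equiv.Perm (Fin n)) : ℕ := aiL (word π)

def exc {n : ℕ} (π : Equiv.Perm (Fin n)) : ℕ :=
  (Finset.univ.filter (fun i : Fin n => (i : ℕ) < (π i : ℕ))).card

def fixp {n : ℕ} (π : Equiv.Perm (Fin n)) : ℕ :=
  (Finset.univ.filter (fun i : Fin n => π i = i)).card

/-- (q;q)_n -/
noncomputable def qq (n : ℕ) : Polynomial ℚ :=
  ∏ i ∈ Finset.range n, (1 - Polynomial.X ^ (i+1))

/-- the q-binomial coefficient -/
noncomputable def qbinom (n k : ℕ) : Polynomial ℚ :=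
  if k ≤ n then qq n / (qq (n-k) * qq k) else 0


instance : DecidablePred IncreasingL :=
  fun w => inferInstanceAs (Decidable (w.IsChain (· < ·)))

/-- `(maj−exc,exc)` q-Eulerian numbers `A_{n,k}(q)` -/
noncomputable def Amaj (n k : ℕ) : Polynomial ℚ :=
  ∑ π ∈ Finset.univ.filter (fun π : Equiv.Perm (Fin n) => exc π = k),
    Polynomial.X ^ (maj π - exc π)

/-- fixed point q-Eulerian numbers `A_{n,k}^{(j)}(q)` via `(maj−exc,exc,fix)` -/
noncomputable def Amajfix (n k j : ℕ) : Polynomial ℚ :=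
  ∑ π ∈ Finset.univ.filter (fun π : Equiv.Perm (Fin n) => exc π = k ∧ fixp π = j),
    Polynomial.X ^ (maj π - exc π)

/-- q-Eulerian numbers via `(inv−lec,lec)` -/
noncomputable def Alec (n k : ℕ) : Polynomial ℚ :=
  ∑ π ∈ Finset.univ.filter (fun π : Equiv.Perm (Fin n) => lec π = k),
    Polynomial.X ^ (inv π - lec π)

/-- fixed point q-Eulerian numbers via `(inv−lec,lec,pix)` -/
noncomputable def Alecpix (n k j : ℕ) : Polynomial ℚ :=
  ∑ π ∈ Finset.univ.filter (fun π : Equiv.Perm (Fin n) => lec π = k ∧ pix π = j),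
    Polynomial.X ^ (inv π - lec π)

/-! Complementing every letter of `word π` except the maximum, `v ↦ n - v` for `v < n`, is an
involution on permutations that keeps `n` in place. It turns each ascent between two letters
`< n` into a descent and vice versa, while the ascent into `n` and the descent out of it, both
present because `n` sits at an interior position, are kept. Matching those two positions with each
other, the new descent count is `(n - 1) - des π`. -/

open Finset

lemma card_filter_add_card_filter_of_iff_not_swap {α : Type*} [DecidableEq α] {T : Finset α}
    {P Q : α → Prop} [DecidablePred P] [DecidablePred Q] {a b : α} (ha : a ∈ T) (hb : b ∈ T)
    (h : ∀ i ∈ T, Q i ↔ ¬ P (Equiv.swap a b i)) :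
    #(T.filter Q) + #(T.filter P) = #T := by
  have hswap : ∀ i ∈ T, Equiv.swap a b i ∈ T := fun i hi => by
    rw [Equiv.swap_apply_def]; split_ifs <;> assumption
  have hQ : #(T.filter Q) = #(T.filter (¬ P ·)) := by
    refine card_nbij' (Equiv.swap a b) (Equiv.swap a b) ?_ ?_
      (fun i _ => Equiv.swap_apply_self a b i) (fun i _ => Equiv.swap_apply_self a b i)
    · intro i hi
      simp only [coe_filter, Set.mem_ofPred_eq] at hi ⊢
      exact ⟨hswap i hi.1, (h i hi.1).1 hi.2⟩
    · intro i hi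
      simp only [coe_filter, Set.mem_ofPred_eq] at hi ⊢
      refine ⟨hswap i hi.1, (h _ (hswap i hi.1)).2 ?_⟩
      simpa using hi.2
  rw [hQ, add_comm, card_filter_add_card_filter_not]

lemma desL_eq_card_filter (w : List ℕ) :
    desL w = #((range (w.length - 1)).filter (fun i => w.getD (i + 1) 0 < w.getD i 0)) :=
  rfl

def complementBelow (m v : ℕ) : ℕ := if v = m then m else m - v

section complementBelow

variable {m u v : ℕ}

@[simp] lemma complementBelow_self : complementBelow m m = m := if_pos rfl

lemma complementBelow_lt (hu : 0 < u) (hum : u < m) : complementBelow m u < m := by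
  rw [complementBelow, if_neg hum.ne]; omega

lemma complementBelow_lt_complementBelow_iff (hum : u < m) (hvm : v < m) :
    complementBelow m u < complementBelow m v ↔ v < u := by
  rw [complementBelow, complementBelow, if_neg hum.ne, if_neg hvm.ne]; omega

end complementBelow

lemma getD_lt_of_nodup {w : List ℕ} {m p i : ℕ} (hw : w.Nodup)
    (hlet : ∀ v ∈ w, v ≤ m) (hp : p < w.length) (hmax : w.getD p 0 = m) (hi : i < w.length)
    (hip : i ≠ p) : w.getD i 0 < m := by
  rw [List.getD_eq_getElem _ _ hi]
  rw [List.getD_eq_getElem _ _ hp] at hmax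
  refine lt_of_le_of_ne (hlet _ (List.getElem_mem hi)) fun h => hip ?_
  exact hw.getElem_inj_iff.1 (h.trans hmax.symm)

lemma getD_map_complementBelow {w : List ℕ} {m i : ℕ} (hi : i < w.length) :
    (w.map (complementBelow m)).getD i 0 = complementBelow m (w.getD i 0) := by
  rw [List.getD_eq_getElem _ _ (by simpa using hi), List.getD_eq_getElem _ _ hi, List.getElem_map]

lemma desL_map_complementBelow {w : List ℕ} {m p : ℕ} (hw : w.Nodup)
    (hlet : ∀ v ∈ w, 0 < v ∧ v ≤ m) (hp0 : 0 < p) (hp : p + 1 < w.length)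
    (hmax : w.getD p 0 = m) :
    desL (w.map (complementBelow m)) = w.length - 1 - desL w := by
  have hpos : ∀ i < w.length, 0 < w.getD i 0 := fun i hi => by
    rw [List.getD_eq_getElem _ _ hi]; exact (hlet _ (List.getElem_mem hi)).1
  have hlt : ∀ i < w.length, i ≠ p → w.getD i 0 < m :=
    fun i => getD_lt_of_nodup hw (fun v hv => (hlet v hv).2) (by omega) hmax
  rw [desL_eq_card_filter, desL_eq_card_filter, List.length_map]
  refine Nat.eq_sub_of_add_eq ((card_filter_add_card_filter_of_iff_not_swap
    (a := p - 1) (b := p) ?_ ?_ ?_).trans (card_range _))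
  · exact mem_range.2 (by omega)
  · exact mem_range.2 (by omega)
  intro i hi
  rw [mem_range] at hi
  rw [getD_map_complementBelow (by omega), getD_map_complementBelow (by omega)]
  rcases (show i = p - 1 ∨ i = p ∨ (i ≠ p - 1 ∧ i ≠ p) by omega) with hi | hi | ⟨hi1, hi2⟩
  · subst i
    rw [Equiv.swap_apply_left, Nat.sub_add_cancel hp0, hmax, complementBelow_self]
    have := complementBelow_lt (hpos (p - 1) (by omega)) (hlt (p - 1) (by omega) (by omega))
    have := hlt (p + 1) hp (by omega)
    omega
  · subst i
    rw [Equiv.swap_apply_right, Nat.sub_add_cancel hp0, hmax, complementBelow_self]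
    have := complementBelow_lt (hpos (p + 1) hp) (hlt (p + 1) hp (by omega))
    have := hlt (p - 1) (by omega) (by omega)
    omega
  · rw [Equiv.swap_apply_of_ne_of_ne hi1 hi2, complementBelow_lt_complementBelow_iff
      (hlt _ (by omega) (by omega)) (hlt _ (by omega) (by omega)), not_lt]
    have hne : w.getD i 0 ≠ w.getD (i + 1) 0 := by
      rw [List.getD_eq_getElem _ _ (by omega), List.getD_eq_getElem _ _ (by omega), Ne,
        hw.getElem_inj_iff]
      omega
    omega

lemma one_le_desL {w : List ℕ} {m p : ℕ} (hw : w.Nodup) (hlet : ∀ v ∈ w, v ≤ m)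
    (hp : p + 1 < w.length) (hmax : w.getD p 0 = m) : 1 ≤ desL w := by
  refine card_pos.2 ⟨p, mem_filter.2 ⟨mem_range.2 (by omega), ?_⟩⟩
  rw [hmax]
  exact getD_lt_of_nodup hw hlet (by omega) hmax hp (by omega)

def revBelowLast (n : ℕ) : Equiv.Perm (Fin n) :=
  Function.Involutive.toPerm (fun x => if (x : ℕ) = n - 1 then x else ⟨n - 2 - x, by omega⟩)
    fun x => Fin.ext (by dsimp only; split_ifs <;> simp_all <;> omega)

lemma revBelowLast_involutive (n : ℕ) : Function.Involutive (revBelowLast n) :=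
  Function.Involutive.toPerm_involutive _

lemma val_revBelowLast_add_one {n : ℕ} (x : Fin n) :
    (revBelowLast n x : ℕ) + 1 = complementBelow n (x + 1) := by
  change ((if (x : ℕ) = n - 1 then x else ⟨n - 2 - x, _⟩ : Fin n) : ℕ) + 1 = _
  unfold complementBelow
  split_ifs <;> simp_all <;> omega

section Perm

variable {n : ℕ}

lemma word_trans_revBelowLast (π : Equiv.Perm (Fin n)) :
    word (π.trans (revBelowLast n)) = (word π).map (complementBelow n) := by
  simp [word, List.map_ofFn, Function.comp_def, val_revBelowLast_add_one]

lemma word_nodup (π : Equiv.Perm (Fin n)) : (word π).Nodup :=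
  List.nodup_ofFn.2 fun x y h => π.injective (Fin.ext (by simpa using h))

lemma mem_word {π : Equiv.Perm (Fin n)} {v : ℕ} (hv : v ∈ word π) : 0 < v ∧ v ≤ n := by
  obtain ⟨i, rfl⟩ := List.mem_ofFn.1 hv
  exact ⟨Nat.succ_pos _, (π i).isLt⟩

variable {j : ℕ} {π : Equiv.Perm (Fin n)}

lemma getD_word_trans_revBelowLast (hjn : j < n) (hπ : (word π).getD (j - 1) 0 = n) :
    (word (π.trans (revBelowLast n))).getD (j - 1) 0 = n := by
  rw [word_trans_revBelowLast, getD_map_complementBelow (by simp [word]; omega), hπ,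
    complementBelow_self]

lemma des_trans_revBelowLast (hj : 1 < j) (hjn : j < n) (hπ : (word π).getD (j - 1) 0 = n) :
    des (π.trans (revBelowLast n)) = n - 1 - des π := by
  rw [des, des, word_trans_revBelowLast, desL_map_complementBelow (word_nodup π)
    (fun _ => mem_word) (by omega) (by simp [word]; omega) hπ]
  simp [word]

lemma one_le_des (hj : 1 < j) (hjn : j < n) (hπ : (word π).getD (j - 1) 0 = n) : 1 ≤ des π :=
  one_le_desL (word_nodup π) (fun _ hv => (mem_word hv).2) (by simp [word]; omega) hπ

end Perm

/-- Symmetry of the restricted Eulerian numbers: for `1 < j < n`,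
`B_{n,k}^{(j)} = B_{n,n-1-k}^{(j)}`. -/
theorem restricted_eulerian_symmetric (n j k : ℕ) (h1 : 1 < j) (h2 : j < n) :
    (Finset.univ.filter
        (fun π : Equiv.Perm (Fin n) => (word π).getD (j-1) 0 = n ∧ des π = k)).card =
    (Finset.univ.filter
        (fun π : Equiv.Perm (Fin n) => (word π).getD (j-1) 0 = n ∧ des π = n - 1 - k)).card := by
  have hσ (π : Equiv.Perm (Fin n)) : (π.trans (revBelowLast n)).trans (revBelowLast n) = π :=
    Equiv.ext fun x => revBelowLast_involutive n (π x)
  refine card_nbij' (·.trans (revBelowLast n)) (·.trans (revBelowLast n)) ?_ ?_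
    (fun π _ => hσ π) (fun π _ => hσ π)
  · intro π hπ
    obtain ⟨-, hmax, rfl⟩ := mem_filter.1 hπ
    exact mem_filter.2
      ⟨mem_univ _, getD_word_trans_revBelowLast h2 hmax, des_trans_revBelowLast h1 h2 hmax⟩
  · intro π hπ
    obtain ⟨-, hmax, hk⟩ := mem_filter.1 hπ
    have := one_le_des h1 h2 hmax
    refine mem_filter.2 ⟨mem_univ _, getD_word_trans_revBelowLast h2 hmax, ?_⟩
    rw [des_trans_revBelowLast h1 h2 hmax]
    omega

end QEuler
end

section
/- For every n and every subset decomposition: Σ over pairs (σ, p) where p is an increasing word on a subset S ⊆ [n] of size n−k and σ is a permutation of [n]∖S with lec(σ) = a and pix(σ) = j, weighted by q^{(inv−lec) of the concatenated object}, equals [n choose k]_q · A_{k,a}^{(j)}(q); summing over k gives the two-pix-permutation identity Σ_{v ∈ W_n(j), lec v = a} q^{(inv−lec)(v)} = Σ_{k≥1} [n choose k]_q A_{k,a}^{(j)}(q). -/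
namespace QEuler

/-!
A permutation `π` of `[n]` whose word is increasing after position `k` is determined by the set
`S` of its first `k` values and the standardization `σ ∈ S_k` of its first `k` letters, and every
pair `(S, σ)` occurs. The hook factorization only sees the relative order of letters, so the first
`k` letters have the same `lec` and `pix` as `σ`, while `inv π = inv σ + crossInv n S`. Summing
`q ^ crossInv n S` over the `k`-subsets of `[n]` gives `[n choose k]_q`, since both satisfy the
`q`-Pascal recurrence.
-/

theorem invL_append (u v : List ℕ) :
    invL (u ++ v) = invL u + invL v + (u.map fun a => v.countP (· < a)).sum := by
  induction u with
  | nil => simp [invL]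
  | cons a l ih =>
    simp only [List.cons_append, invL, List.countP_append, ih, List.map_cons, List.sum_cons]
    ring

theorem invL_eq_zero_of_pairwise {w : List ℕ} (h : w.Pairwise (· < ·)) : invL w = 0 := by
  induction w with
  | nil => rfl
  | cons a l ih =>
    rw [List.pairwise_cons] at h
    simp only [invL, ih h.2, add_zero, List.countP_eq_zero, decide_eq_true_eq, not_lt]
    exact fun b hb => (h.1 b hb).le

theorem sum_map_invL_le_invL_flatten : ∀ L : List (List ℕ), (L.map invL).sum ≤ invL L.flatten
  | [] => le_rfl
  | w :: L => by
    have := sum_map_invL_le_invL_flatten L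
    simp only [List.map_cons, List.sum_cons, List.flatten_cons, invL_append]
    omega

theorem hookAux_fst_append_flatten_snd :
    ∀ (fuel : ℕ) (w : List ℕ), (hookAux fuel w).1 ++ (hookAux fuel w).2.flatten = w
  | 0, _ => by simp [hookAux]
  | fuel + 1, w => by
    simp only [hookAux]
    cases lastDesc w with
    | none => simp
    | some i =>
      simp only [List.flatten_append, List.flatten_cons, List.flatten_nil, List.append_nil,
        ← List.append_assoc, hookAux_fst_append_flatten_snd fuel (w.take i), List.take_append_drop]

theorem lecL_le_invL (w : List ℕ) : lecL w ≤ invL w := by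
  have hsum := sum_map_invL_le_invL_flatten (hookFact w).2
  have hsplit := congrArg invL (hookAux_fst_append_flatten_snd w.length w)
  rw [invL_append] at hsplit
  unfold lecL
  unfold hookFact at hsum ⊢
  omega

section OrderPreservingMap

variable {w : List ℕ} {f : ℕ → ℕ}

theorem invL_map (hf : ∀ a ∈ w, ∀ b ∈ w, f a < f b ↔ a < b) : invL (w.map f) = invL w := by
  induction w with
  | nil => rfl
  | cons a l ih =>
    simp only [List.map_cons, invL, List.countP_map]
    rw [ih fun x hx y hy => hf x (by simp [hx]) y (by simp [hy])]
    congr 1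
    exact List.countP_congr fun b hb => by simp [hf b (by simp [hb]) a (by simp)]

theorem descSet_map (hf : ∀ a ∈ w, ∀ b ∈ w, f a < f b ↔ a < b) :
    descSet (w.map f) = descSet w := by
  unfold descSet
  rw [List.length_map]
  refine List.filter_congr fun i hi => ?_
  have hi : i + 1 < w.length := by rw [List.mem_range] at hi; omega
  have hi' : i + 1 < (w.map f).length := by simpa using hi
  rw [List.getD_eq_getElem _ _ hi', List.getD_eq_getElem _ _ (by omega),
    List.getD_eq_getElem _ _ hi, List.getD_eq_getElem _ _ (by omega), List.getElem_map,
    List.getElem_map]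
  exact decide_eq_decide.2 (hf _ (List.getElem_mem _) _ (List.getElem_mem _))

theorem hookAux_map : ∀ (fuel : ℕ) {w : List ℕ}, (∀ a ∈ w, ∀ b ∈ w, f a < f b ↔ a < b) →
    hookAux fuel (w.map f) = ((hookAux fuel w).1.map f, (hookAux fuel w).2.map (List.map f))
  | 0, _, _ => rfl
  | fuel + 1, w, hf => by
    have hlast : lastDesc (w.map f) = lastDesc w := by rw [lastDesc, descSet_map hf, lastDesc]
    simp only [hookAux, hlast]
    cases lastDesc w with
    | none => rfl
    | some i =>
      have ih := hookAux_map fuel (w := w.take i)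
        fun a ha b hb => hf a (List.mem_of_mem_take ha) b (List.mem_of_mem_take hb)
      simp only [← List.map_take, ih, ← List.map_drop, List.map_append, List.map_cons,
        List.map_nil]

theorem hookFact_map (hf : ∀ a ∈ w, ∀ b ∈ w, f a < f b ↔ a < b) :
    hookFact (w.map f) = ((hookFact w).1.map f, (hookFact w).2.map (List.map f)) := by
  rw [hookFact, List.length_map, hookAux_map _ hf, hookFact]

theorem pixL_map (hf : ∀ a ∈ w, ∀ b ∈ w, f a < f b ↔ a < b) : pixL (w.map f) = pixL w := by
  rw [pixL, hookFact_map hf, List.length_map, pixL]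

theorem lecL_map (hf : ∀ a ∈ w, ∀ b ∈ w, f a < f b ↔ a < b) : lecL (w.map f) = lecL w := by
  rw [lecL, hookFact_map hf, List.map_map, lecL]
  refine congrArg _ (List.map_congr_left fun h hh => invL_map fun a ha b hb => ?_)
  have hw : ∀ x ∈ h, x ∈ w := fun x hx => by
    rw [← hookAux_fst_append_flatten_snd w.length w]
    exact List.mem_append_right _ (List.mem_flatten.2 ⟨h, hh, hx⟩)
  exact hf a (hw a ha) b (hw b hb)

end OrderPreservingMap

section QBinomial

open Finset Polynomial

/-- The inversion number of the word listing `S` increasingly, followed by `range n \ S`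
increasingly. -/
def crossInv (n : ℕ) (S : Finset ℕ) : ℕ :=
  ∑ s ∈ S, #{t ∈ range n \ S | t < s}

noncomputable def crossInvGF (n k : ℕ) : ℚ[X] :=
  ∑ S ∈ (range n).powersetCard k, X ^ crossInv n S

theorem crossInvGF_zero_right (n : ℕ) : crossInvGF n 0 = 1 := by
  simp [crossInvGF, crossInv]

theorem crossInvGF_self (n : ℕ) : crossInvGF n n = 1 := by
  have h := powersetCard_self (range n)
  rw [card_range] at h
  simp [crossInvGF, h, crossInv]

theorem crossInv_succ_of_subset {n : ℕ} {S : Finset ℕ} (hS : S ⊆ range n) :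
    crossInv (n + 1) S = crossInv n S := by
  refine sum_congr rfl fun s hs => ?_
  have hs : s < n := mem_range.1 (hS hs)
  rw [range_add_one, insert_sdiff_of_notMem _ fun hn => notMem_range_self (hS hn),
    filter_insert, if_neg (by omega)]

theorem crossInv_succ_insert {n : ℕ} {S : Finset ℕ} (hS : S ⊆ range n) :
    crossInv (n + 1) (insert n S) = crossInv n S + (n - #S) := by
  have hnS : n ∉ S := fun hn => notMem_range_self (hS hn)
  have hcompl : range (n + 1) \ insert n S = range n \ S := by
    ext x
    simp only [mem_sdiff, mem_insert, mem_range, not_or]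
    exact ⟨fun ⟨h, hn, hS⟩ => ⟨by omega, hS⟩, fun ⟨h, hS⟩ => ⟨by omega, by omega, hS⟩⟩
  have hlt : {t ∈ range n \ S | t < n} = range n \ S :=
    filter_true_of_mem fun x hx => mem_range.1 (mem_sdiff.1 hx).1
  rw [crossInv, sum_insert hnS, hcompl, hlt, card_sdiff_of_subset hS, card_range, add_comm,
    crossInv]

theorem crossInvGF_succ_succ (n m : ℕ) :
    crossInvGF (n + 1) (m + 1) = crossInvGF n (m + 1) + X ^ (n - m) * crossInvGF n m := by
  have hinsert : Set.InjOn (insert n) ((range n).powersetCard m : Set (Finset ℕ)) :=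
    fun S hS T hT hST => by
      rw [mem_coe, mem_powersetCard] at hS hT
      rw [← erase_insert fun h => notMem_range_self (hS.1 h),
        ← erase_insert fun h => notMem_range_self (hT.1 h), hST]
  have hdisj : Disjoint ((range n).powersetCard (m + 1))
      (((range n).powersetCard m).image (insert n)) := by
    refine disjoint_left.2 fun S hS hS' => ?_
    obtain ⟨T, -, rfl⟩ := mem_image.1 hS'
    exact notMem_range_self ((mem_powersetCard.1 hS).1 (mem_insert_self n T))
  rw [crossInvGF, range_add_one, powersetCard_succ_insert notMem_range_self,
    sum_union hdisj, sum_image hinsert, crossInvGF, crossInvGF, mul_sum]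
  congr 1
  · refine sum_congr rfl fun S hS => ?_
    rw [crossInv_succ_of_subset (mem_powersetCard.1 hS).1]
  · refine sum_congr rfl fun S hS => ?_
    rw [mem_powersetCard] at hS
    rw [crossInv_succ_insert hS.1, hS.2, pow_add, mul_comm]

theorem qq_succ (n : ℕ) : qq (n + 1) = qq n * (1 - X ^ (n + 1)) :=
  prod_range_succ _ n

theorem qq_ne_zero (n : ℕ) : qq n ≠ 0 := by
  intro h
  simpa [qq, eval_prod] using congrArg (eval 0) h

theorem qq_mul_qq_mul_crossInvGF (a b : ℕ) : qq a * qq b * crossInvGF (a + b) a = qq (a + b) := by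
  induction a generalizing b with
  | zero => simp [crossInvGF_zero_right, qq]
  | succ a iha =>
    induction b with
    | zero => simp [crossInvGF_self, qq]
    | succ b ihb =>
      have h₁ : qq (a + 1) * qq b * crossInvGF (a + b + 1) (a + 1) = qq (a + b + 1) := by
        rwa [Nat.add_right_comm] at ihb
      have h₂ : qq a * qq (b + 1) * crossInvGF (a + b + 1) a = qq (a + b + 1) := iha (b + 1)
      rw [show a + 1 + (b + 1) = a + b + 1 + 1 by ring, crossInvGF_succ_succ,
        show a + b + 1 - a = b + 1 by omega, qq_succ (a + b + 1)]
      rw [qq_succ a] at h₁ ⊢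
      rw [qq_succ b] at h₂ ⊢
      linear_combination (1 - X ^ (b + 1)) * h₁ + X ^ (b + 1) * (1 - X ^ (a + 1)) * h₂

theorem qbinom_eq_crossInvGF {n k : ℕ} (h : k ≤ n) : qbinom n k = crossInvGF n k := by
  obtain ⟨b, rfl⟩ := Nat.exists_eq_add_of_le h
  rw [qbinom, if_pos h, Nat.add_sub_cancel_left, ← qq_mul_qq_mul_crossInvGF, mul_comm (qq b)]
  exact mul_div_cancel_left₀ _ (mul_ne_zero (qq_ne_zero _) (qq_ne_zero _))

end QBinomial

section Shuffle

open Finset Equiv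

variable {n k : ℕ}

def finSplit (hk : k ≤ n) : Fin k ⊕ Fin (n - k) ≃ Fin n :=
  finSumFinEquiv.trans (finCongr (Nat.add_sub_cancel' hk))

theorem word_take (hk : k ≤ n) (π : Perm (Fin n)) :
    (word π).take k = List.ofFn fun i => (π (finSplit hk (.inl i)) : ℕ) + 1 := by
  refine List.ext_getElem (by simp [word, hk]) fun i h₁ h₂ => ?_
  simp only [word, List.getElem_take, List.getElem_ofFn]
  congr 3

theorem word_drop (hk : k ≤ n) (π : Perm (Fin n)) :
    (word π).drop k = List.ofFn fun j => (π (finSplit hk (.inr j)) : ℕ) + 1 := by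
  refine List.ext_getElem (by simp [word]) fun i h₁ h₂ => ?_
  simp only [word, List.getElem_drop, List.getElem_ofFn]
  congr 3

theorem increasingL_ofFn_succ_iff {m : ℕ} (g : Fin m → ℕ) :
    IncreasingL (List.ofFn fun i => g i + 1) ↔ StrictMono g := by
  rw [IncreasingL, List.Chain', List.isChain_iff_pairwise, List.pairwise_ofFn]
  exact forall₃_congr fun i j _ => Nat.add_lt_add_iff_right

theorem countP_ofFn_eq_card_filter {m : ℕ} (g : Fin m → ℕ) (p : ℕ → Bool) :
    (List.ofFn g).countP p = #{j | p (g j)} := by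
  rw [List.ofFn_eq_map, List.countP_map, Fin.univ_def, card_def, filter_val]
  simp [List.countP_eq_length_filter, Function.comp_def]

section Relabel

variable {S : Finset ℕ} (hcard : #S = k)

/-- The increasing relabelling of the letters `1, …, k` by the elements of `S`; the shifts by one
come from the letters of `word` being `π i + 1`. -/
noncomputable def relabel (m : ℕ) : ℕ :=
  if h : m - 1 < k then S.orderEmbOfFin hcard ⟨m - 1, h⟩ + 1 else m

theorem relabel_succ (i : Fin k) : relabel hcard (i + 1) = S.orderEmbOfFin hcard i + 1 := by
  simp [relabel]

theorem map_relabel_word (σ : Perm (Fin k)) :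
    (word σ).map (relabel hcard) = List.ofFn fun i => S.orderEmbOfFin hcard (σ i) + 1 := by
  simp [word, List.map_ofFn, Function.comp_def, relabel_succ]

theorem relabel_lt_relabel_iff (σ : Perm (Fin k)) :
    ∀ a ∈ word σ, ∀ b ∈ word σ, relabel hcard a < relabel hcard b ↔ a < b := by
  simp only [word, List.mem_ofFn, forall_exists_index, forall_apply_eq_imp_iff, relabel_succ]
  intro i i'
  simp

end Relabel

theorem exists_perm_orderEmbOfFin_eq {S : Finset ℕ} (hcard : #S = k) {f : Fin k → ℕ}
    (hf : Function.Injective f) (hfS : ∀ i, f i ∈ S) :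
    ∃ σ : Perm (Fin k), ∀ i, S.orderEmbOfFin hcard (σ i) = f i := by
  let τ : Fin k → Fin k := fun i => (S.orderIsoOfFin hcard).symm ⟨f i, hfS i⟩
  have hτ (i : Fin k) : S.orderEmbOfFin hcard (τ i) = f i := by
    simp [τ, ← coe_orderIsoOfFin_apply]
  have hτinj : Function.Injective τ := fun i i' h => hf (by rw [← hτ, h, hτ])
  exact ⟨Equiv.ofBijective τ (Finite.injective_iff_bijective.1 hτinj), hτ⟩

section FixedSubset

variable {S : Finset ℕ} (hS : S ⊆ range n) (hcard : #S = k)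
include hS hcard

theorem card_range_sdiff : #(range n \ S) = n - k := by
  rw [card_sdiff_of_subset hS, card_range, hcard]

theorem le_of_subset_range_of_card_eq : k ≤ n :=
  hcard ▸ (card_le_card hS).trans_eq (card_range n)

noncomputable def shuffleEquiv : Fin k ⊕ Fin (n - k) ≃ Fin n :=
  Equiv.ofBijective
    (Sum.elim (fun i => ⟨S.orderEmbOfFin hcard i, mem_range.1 (hS (orderEmbOfFin_mem _ _ _))⟩)
      fun j => ⟨(range n \ S).orderEmbOfFin (card_range_sdiff hS hcard) j,
        mem_range.1 (mem_sdiff.1 (orderEmbOfFin_mem _ _ _)).1⟩) <| by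
    refine (Fintype.bijective_iff_injective_and_card _).2
      ⟨?_, by simp [le_of_subset_range_of_card_eq hS hcard]⟩
    refine Function.Injective.sumElim (fun i i' h => ?_) (fun j j' h => ?_) fun i j h => ?_
    · exact (orderEmbOfFin _ _).injective (Fin.mk.inj h)
    · exact (orderEmbOfFin _ _).injective (Fin.mk.inj h)
    · have := orderEmbOfFin_mem (range n \ S) (card_range_sdiff hS hcard) j
      rw [← Fin.mk.inj h, mem_sdiff] at this
      exact this.2 (orderEmbOfFin_mem _ _ _)

/-- The permutation whose word is `σ` relabelled by `S`, followed by `range n \ S` in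
increasing order. -/
noncomputable def shuffle (σ : Perm (Fin k)) : Perm (Fin n) :=
  ((finSplit (le_of_subset_range_of_card_eq hS hcard)).symm.trans
    (sumCongr σ (Equiv.refl _))).trans (shuffleEquiv hS hcard)

theorem shuffle_finSplit_inl (σ : Perm (Fin k)) (hk : k ≤ n) (i : Fin k) :
    (shuffle hS hcard σ (finSplit hk (.inl i)) : ℕ) = S.orderEmbOfFin hcard (σ i) := by
  simp [shuffle, shuffleEquiv]

theorem shuffle_finSplit_inr (σ : Perm (Fin k)) (hk : k ≤ n) (j : Fin (n - k)) :
    (shuffle hS hcard σ (finSplit hk (.inr j)) : ℕ) =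
      (range n \ S).orderEmbOfFin (card_range_sdiff hS hcard) j := by
  simp [shuffle, shuffleEquiv]

theorem take_word_shuffle (σ : Perm (Fin k)) :
    (word (shuffle hS hcard σ)).take k = (word σ).map (relabel hcard) := by
  rw [word_take (le_of_subset_range_of_card_eq hS hcard), map_relabel_word]
  simp only [shuffle_finSplit_inl]

theorem drop_word_shuffle (σ : Perm (Fin k)) :
    (word (shuffle hS hcard σ)).drop k =
      List.ofFn fun j => (range n \ S).orderEmbOfFin (card_range_sdiff hS hcard) j + 1 := by
  rw [word_drop (le_of_subset_range_of_card_eq hS hcard)]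
  simp only [shuffle_finSplit_inr]

theorem increasingL_drop_word_shuffle (σ : Perm (Fin k)) :
    IncreasingL ((word (shuffle hS hcard σ)).drop k) := by
  rw [drop_word_shuffle, increasingL_ofFn_succ_iff]
  exact (orderEmbOfFin _ _).strictMono

theorem lecL_take_word_shuffle (σ : Perm (Fin k)) :
    lecL ((word (shuffle hS hcard σ)).take k) = lec σ := by
  rw [take_word_shuffle, lecL_map (relabel_lt_relabel_iff hcard σ), lec]

theorem pixL_take_word_shuffle (σ : Perm (Fin k)) :
    pixL ((word (shuffle hS hcard σ)).take k) = pix σ := by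
  rw [take_word_shuffle, pixL_map (relabel_lt_relabel_iff hcard σ), pix]

theorem sum_countP_drop_lt_take_word_shuffle (σ : Perm (Fin k)) :
    (((word (shuffle hS hcard σ)).take k).map
      fun a => ((word (shuffle hS hcard σ)).drop k).countP (· < a)).sum = crossInv n S := by
  have hT (s : ℕ) : #{j | (range n \ S).orderEmbOfFin (card_range_sdiff hS hcard) j < s} =
      #{t ∈ range n \ S | t < s} := by
    conv_rhs => rw [← map_orderEmbOfFin_univ _ (card_range_sdiff hS hcard), filter_map, card_map]
    rfl
  have hcross : crossInv n S = ∑ i, #{t ∈ range n \ S | t < S.orderEmbOfFin hcard i} :=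
    calc crossInv n S
        = ∑ s ∈ univ.map (S.orderEmbOfFin hcard).toEmbedding, #{t ∈ range n \ S | t < s} := by
          rw [map_orderEmbOfFin_univ, crossInv]
      _ = _ := sum_map _ _ _
  rw [take_word_shuffle, map_relabel_word, drop_word_shuffle, List.map_ofFn, List.sum_ofFn, hcross]
  simp only [Function.comp_apply, countP_ofFn_eq_card_filter, Nat.add_lt_add_iff_right,
    decide_eq_true_eq, hT]
  exact Equiv.sum_comp σ fun i => #{t ∈ range n \ S | t < S.orderEmbOfFin hcard i}

theorem invL_word_shuffle (σ : Perm (Fin k)) :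
    invL (word (shuffle hS hcard σ)) = inv σ + crossInv n S := by
  have hdrop : invL ((word (shuffle hS hcard σ)).drop k) = 0 := by
    refine invL_eq_zero_of_pairwise ?_
    rw [← List.isChain_iff_pairwise]
    exact increasingL_drop_word_shuffle hS hcard σ
  rw [← List.take_append_drop k (word _), invL_append, sum_countP_drop_lt_take_word_shuffle,
    hdrop, take_word_shuffle, invL_map (relabel_lt_relabel_iff hcard σ), inv, add_zero]

end FixedSubset

theorem exists_shuffle_eq (hk : k ≤ n) {π : Perm (Fin n)}
    (hπ : IncreasingL ((word π).drop k)) :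
    ∃ (S : Finset ℕ) (hS : S ⊆ range n) (hcard : #S = k) (σ : Perm (Fin k)),
      shuffle hS hcard σ = π := by
  set f : Fin k → ℕ := fun i => π (finSplit hk (.inl i))
  have hf : Function.Injective f := fun i i' h =>
    Sum.inl_injective ((finSplit hk).injective (π.injective (Fin.ext h)))
  have hS : univ.image f ⊆ range n := fun s hs => by
    obtain ⟨i, -, rfl⟩ := mem_image.1 hs
    exact mem_range.2 (π _).isLt
  have hcard : #(univ.image f) = k := by simp [card_image_of_injective _ hf]
  obtain ⟨σ, hσ⟩ := exists_perm_orderEmbOfFin_eq hcard hf fun i => mem_image_of_mem f (mem_univ i)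
  have hdrop : (fun j => (π (finSplit hk (.inr j)) : ℕ)) =
      (range n \ univ.image f).orderEmbOfFin (card_range_sdiff hS hcard) := by
    refine orderEmbOfFin_unique _ (fun j => mem_sdiff.2 ⟨mem_range.2 (π _).isLt, fun hj => ?_⟩)
      ((increasingL_ofFn_succ_iff _).1 (word_drop hk π ▸ hπ))
    obtain ⟨i, -, hi⟩ := mem_image.1 hj
    exact Sum.inl_ne_inr ((finSplit hk).injective (π.injective (Fin.ext hi)))
  refine ⟨_, hS, hcard, σ, Equiv.ext fun x => ?_⟩
  obtain ⟨s | j, rfl⟩ := (finSplit hk).surjective x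
  · exact Fin.ext ((shuffle_finSplit_inl hS hcard σ hk s).trans (hσ s))
  · exact Fin.ext ((shuffle_finSplit_inr hS hcard σ hk j).trans (congrFun hdrop j).symm)

theorem eq_of_shuffle_eq {S S' : Finset ℕ} {hS : S ⊆ range n} {hS' : S' ⊆ range n}
    {hcard : #S = k} {hcard' : #S' = k} {σ σ' : Perm (Fin k)}
    (h : shuffle hS hcard σ = shuffle hS' hcard' σ') : S = S' ∧ σ = σ' := by
  have hk := le_of_subset_range_of_card_eq hS hcard
  have hval (i : Fin k) : S.orderEmbOfFin hcard (σ i) = S'.orderEmbOfFin hcard' (σ' i) := by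
    rw [← shuffle_finSplit_inl hS hcard σ hk, ← shuffle_finSplit_inl hS' hcard' σ' hk, h]
  have himage {T : Finset ℕ} (hT : #T = k) (τ : Perm (Fin k)) :
      univ.image (fun i => T.orderEmbOfFin hT (τ i)) = T := by
    have := image_image (s := univ) (f := τ) (g := T.orderEmbOfFin hT)
    rw [image_univ_equiv, image_orderEmbOfFin_univ] at this
    exact this.symm
  have hSS' : S = S' := by
    rw [← himage hcard σ, ← himage hcard' σ']
    simp_rw [hval]
  subst hSS'
  exact ⟨rfl, Equiv.ext fun i => (orderEmbOfFin S hcard).injective (hval i)⟩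

end Shuffle

open Finset Polynomial in
theorem sum_filter_increasingL_drop {n k : ℕ} (hk : k ≤ n) (a j : ℕ) :
    ∑ π ∈ univ.filter (fun π : Equiv.Perm (Fin n) =>
        IncreasingL ((word π).drop k) ∧ lecL ((word π).take k) = a ∧ pixL ((word π).take k) = j),
      (X : ℚ[X]) ^ (invL (word π) - lecL ((word π).take k)) =
    qbinom n k * Alecpix k a j := by
  rw [qbinom_eq_crossInvGF hk, crossInvGF, Alecpix, sum_mul_sum, ← sum_product']
  have hmem : ∀ p ∈ (range n).powersetCard k ×ˢ
      univ.filter (fun σ : Equiv.Perm (Fin k) => lec σ = a ∧ pix σ = j),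
      (p.1 ⊆ range n ∧ #p.1 = k) ∧ lec p.2 = a ∧ pix p.2 = j := fun p hp => by
    simpa [mem_powersetCard] using hp
  symm
  refine sum_bij (fun p hp => shuffle (hmem p hp).1.1 (hmem p hp).1.2 p.2) (fun p hp => ?_)
    (fun p hp p' hp' h => ?_) (fun π hπ => ?_) (fun p hp => ?_)
  · obtain ⟨⟨hS, hcard⟩, hlec, hpix⟩ := hmem p hp
    simp only [mem_filter, mem_univ, true_and]
    exact ⟨increasingL_drop_word_shuffle hS hcard p.2,
      (lecL_take_word_shuffle hS hcard p.2).trans hlec,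
      (pixL_take_word_shuffle hS hcard p.2).trans hpix⟩
  · obtain ⟨hS, hσ⟩ := eq_of_shuffle_eq h
    exact Prod.ext hS hσ
  · obtain ⟨-, hπ, hlec, hpix⟩ := mem_filter.1 hπ
    obtain ⟨S, hS, hcard, σ, rfl⟩ := exists_shuffle_eq hk hπ
    refine ⟨(S, σ), ?_, rfl⟩
    rw [lecL_take_word_shuffle] at hlec
    rw [pixL_take_word_shuffle] at hpix
    simp [mem_powersetCard, hS, hcard, hlec, hpix]
  · obtain ⟨⟨hS, hcard⟩, -⟩ := hmem p hp
    rw [invL_word_shuffle, lecL_take_word_shuffle, ← pow_add]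
    have := lecL_le_invL (word p.2)
    rw [← inv, ← lec] at this
    congr 1
    omega

/-- A two-pix-permutation `(p₁, τ₁, …, τ_r, p₂)` of `[n]` is encoded as a pair `(π, k)`:
`(word π).take k` is `p₁τ₁⋯τ_r` and `(word π).drop k` is `p₂`. -/
theorem two_pix_permutation_identity (n j a : ℕ) :
    (∀ k ≤ n,
      ∑ π ∈ Finset.univ.filter (fun π : Equiv.Perm (Fin n) =>
          IncreasingL ((word π).drop k) ∧
          lecL ((word π).take k) = a ∧ pixL ((word π).take k) = j),
        (Polynomial.X : Polynomial ℚ) ^ (invL (word π) - lecL ((word π).take k)) =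
      qbinom n k * Alecpix k a j)
    ∧
    (∑ k ∈ Finset.Icc 1 n,
        ∑ π ∈ Finset.univ.filter (fun π : Equiv.Perm (Fin n) =>
            IncreasingL ((word π).drop k) ∧
            lecL ((word π).take k) = a ∧ pixL ((word π).take k) = j),
          (Polynomial.X : Polynomial ℚ) ^ (invL (word π) - lecL ((word π).take k)) =
      ∑ k ∈ Finset.Icc 1 n, qbinom n k * Alecpix k a j) :=
  ⟨fun _ hk => sum_filter_increasingL_drop hk a j,
    Finset.sum_congr rfl fun _ hk => sum_filter_increasingL_drop (Finset.mem_Icc.1 hk).2 a j⟩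

end QEuler
end
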